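/- arXiv:1111.1585 — 2 statements merged into one kernel-verified Lean document; each statement's English description precedes it below -/
import Mathlib

section
/- Let (X,G) be a faithful transformation monoid where G is a group. Then the transformation monoid (X, G ∪ X̄), obtained by adjoining to G all constant maps x̄: X → X (y ↦ x), strongly divides the wreath product (X, U_X) ≀ (G,G), where U_X = X̄ ∪ {1} is the monoid of constant maps on X together with the identity. The covering is given by φ(x,g) = x·g. -/
/-- A transformation monoid `(X, M)`: a monoid `M` together with a right
action of `M` on the set `X` (the action is not required to be faithful). -/
structure TM where
  /-- the state set -/
  X : Type
  /-- the monoid -/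
  M : Type
  [str : Monoid M]
  /-- the right action of `M` on `X` -/
  act : X → M → X
  act_one : ∀ x, act x 1 = x
  act_mul : ∀ x m n, act x (m * n) = act (act x m) n

attribute [instance] TM.str

/-- A transformation monoid is faithful if distinct monoid elements act as
distinct transformations. -/
def TM.Faithful (T : TM) : Prop :=
  ∀ m m' : T.M, (∀ x, T.act x m = T.act x m') → m = m'

/-- The wreath product `(X,M) ≀ (Y,N)`: the monoid `M^Y ⋊ N` (with
multiplication `(f,n)(g,k) = (f + (n*g), nk)`, where `(f + (n*g))(y) =
f(y)·g(y·n)`) acting on `X × Y` by `(x,y)·(f,n) = (x·(yf), y·n)`. -/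
def TM.wr (S T : TM) : TM where
  X := S.X × T.X
  M := (T.X → S.M) × T.M
  str :=
    { mul := fun p q => (fun y => p.1 y * q.1 (T.act y p.2), p.2 * q.2)
      one := (fun _ => 1, 1)
      npow := fun n x => @npowRec _ ⟨(fun _ => 1, 1)⟩
        ⟨fun p q => (fun y => p.1 y * q.1 (T.act y p.2), p.2 * q.2)⟩ n x
      npow_zero := fun _ => rfl
      npow_succ := fun _ _ => rfl
      mul_assoc := by
        intro a b c
        refine Prod.ext ?_ (mul_assoc _ _ _)
        funext y
        show (a.1 y * b.1 (T.act y a.2)) * c.1 (T.act y (a.2 * b.2))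
            = a.1 y * (b.1 (T.act y a.2) * c.1 (T.act (T.act y a.2) b.2))
        rw [T.act_mul, mul_assoc]
      one_mul := by
        intro a
        refine Prod.ext ?_ (one_mul _)
        funext y
        show 1 * a.1 (T.act y 1) = a.1 y
        rw [T.act_one, one_mul]
      mul_one := by
        intro a
        refine Prod.ext ?_ (mul_one _)
        funext y
        show a.1 y * 1 = a.1 y
        exact mul_one _ }
  act := fun xy fn => (S.act xy.1 (fn.1 xy.2), T.act xy.2 fn.2)
  act_one := by
    intro x
    refine Prod.ext (S.act_one _) (T.act_one _)
  act_mul := by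
    intro x m n
    refine Prod.ext ?_ (T.act_mul _ _ _)
    exact (S.act_mul _ _ _).trans rfl

/-- `(X,M)` strongly divides `(Y,N)` via the surjection `φ : Y → X`:
there are a submonoid `N' ⊆ N` and a surjective homomorphism `ψ : N' → M`
with `φ(y·n) = φ(y)·ψ(n)`. -/
def TM.SDivVia (S T : TM) (φ : T.X → S.X) : Prop :=
  Function.Surjective φ ∧
  ∃ (N' : Submonoid T.M) (ψ : N' →* S.M),
    Function.Surjective ψ ∧
    ∀ (y : T.X) (n : N'), φ (T.act y (n : T.M)) = S.act (φ y) (ψ n)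

/-- Strong division of transformation monoids. -/
def TM.SDiv (S T : TM) : Prop :=
  ∃ φ : T.X → S.X, TM.SDivVia S T φ

/-- The full transformation monoid `T(X)` on `X`, with multiplication
`(fg)(x) = g(f(x))` matching the right-action convention. -/
def TMon (X : Type) : Type := X → X

instance (X : Type) : Monoid (TMon X) where
  mul f g := fun x => g (f x)
  one := fun x => x
  mul_assoc := fun _ _ _ => rfl
  one_mul := fun _ => rfl
  mul_one := fun _ => rfl

/-- The faithful transformation monoid on `X` given by a submonoid of
`T(X)`. -/
def subTM (X : Type) (N : Submonoid (TMon X)) : TM where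
  X := X
  M := N
  act := fun x f => (f : TMon X) x
  act_one := fun _ => rfl
  act_mul := fun _ _ _ => rfl

/-- The submonoid `U_X = X̄ ∪ {1}` of `T(X)`: the identity together with all
constant maps `x̄ : y ↦ x`. -/
def UXsub (X : Type) : Submonoid (TMon X) where
  carrier := {f : TMon X | f = 1 ∨ ∃ p : X, f = fun _ => p}
  one_mem' := Or.inl rfl
  mul_mem' := by
    rintro f g (rfl | ⟨p, rfl⟩) hg
    · rcases hg with rfl | ⟨q, rfl⟩
      · exact Or.inl rfl
      · exact Or.inr ⟨q, rfl⟩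
    · rcases hg with rfl | ⟨q, rfl⟩
      · exact Or.inr ⟨p, rfl⟩
      · exact Or.inr ⟨q, rfl⟩

/-- The transformation monoid of a monoid acting on itself by right
multiplication. -/
def regTM (G : Type) [Monoid G] : TM where
  X := G
  M := G
  act := fun x g => x * g
  act_one := mul_one
  act_mul := fun x m n => (mul_assoc x m n).symm

/-- The submonoid `G ∪ X̄` of `T(X)` obtained by adjoining to `G ⊆ T(X)` all
constant maps on `X`. -/
def withConstsSub (X : Type) (G : Submonoid (TMon X)) : Submonoid (TMon X) where
  carrier := {f : TMon X | f ∈ G ∨ ∃ p : X, f = fun _ => p}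
  one_mem' := Or.inl G.one_mem
  mul_mem' := by
    rintro f g (hf | ⟨p, rfl⟩) hg
    · rcases hg with hg | ⟨q, rfl⟩
      · exact Or.inl (G.mul_mem hf hg)
      · exact Or.inr ⟨q, rfl⟩
    · rcases hg with hg | ⟨q, rfl⟩
      · exact Or.inr ⟨(g : TMon X) p, rfl⟩
      · exact Or.inr ⟨q, rfl⟩

/-! Since `(X, G ∪ X̄)` is faithful and `φ` is onto, an element of the wreath product whose
action `φ` carries onto that of some transformation determines that transformation, and these
elements form a submonoid on which the assignment is a homomorphism. So it suffices that every
element of `G ∪ X̄` is covered: `g ∈ G` by `(1, g)`, and the constant `c̄` by `(g ↦ (g⁻¹c)‾, 1)`. -/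

namespace TM

variable {S T : TM} {φ : T.X → S.X}

def liftable (S T : TM) (φ : T.X → S.X) : Submonoid T.M where
  carrier := {n | ∃ m : S.M, ∀ y, φ (T.act y n) = S.act (φ y) m}
  one_mem' := ⟨1, fun y => by rw [T.act_one, S.act_one]⟩
  mul_mem' := by
    rintro n n' ⟨m, hm⟩ ⟨m', hm'⟩
    exact ⟨m * m', fun y => by rw [T.act_mul, hm', hm, S.act_mul]⟩

theorem Faithful.eq_of_covers (hS : S.Faithful) (hφ : Function.Surjective φ) {n : T.M}
    {m m' : S.M} (hm : ∀ y, φ (T.act y n) = S.act (φ y) m)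
    (hm' : ∀ y, φ (T.act y n) = S.act (φ y) m') : m = m' :=
  hS m m' fun x => by
    obtain ⟨y, rfl⟩ := hφ x
    rw [← hm, hm']

noncomputable def liftableHom (hS : S.Faithful) (hφ : Function.Surjective φ) :
    liftable S T φ →* S.M where
  toFun n := n.2.choose
  map_one' := hS.eq_of_covers hφ (liftable S T φ).one_mem.choose_spec
    fun y => by rw [T.act_one, S.act_one]
  map_mul' n n' := hS.eq_of_covers hφ (n * n').2.choose_spec
    fun y => by rw [Submonoid.coe_mul, T.act_mul, n'.2.choose_spec, n.2.choose_spec, S.act_mul]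

theorem liftableHom_spec (hS : S.Faithful) (hφ : Function.Surjective φ) (y : T.X)
    (n : liftable S T φ) : φ (T.act y n) = S.act (φ y) (liftableHom hS hφ n) :=
  n.2.choose_spec y

theorem sdivVia_of_faithful (hS : S.Faithful) (hφ : Function.Surjective φ)
    (hlift : ∀ m : S.M, ∃ n : T.M, ∀ y, φ (T.act y n) = S.act (φ y) m) : S.SDivVia T φ := by
  refine ⟨hφ, liftable S T φ, liftableHom hS hφ, fun m => ?_, liftableHom_spec hS hφ⟩
  obtain ⟨n, hn⟩ := hlift m
  exact ⟨⟨n, m, hn⟩, hS.eq_of_covers hφ (fun y => liftableHom_spec hS hφ y ⟨n, m, hn⟩) hn⟩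

end TM

theorem subTM_faithful (X : Type) (N : Submonoid (TMon X)) : (subTM X N).Faithful :=
  fun _ _ h => Subtype.ext (funext h)

/-- Let `(X,G)` be a faithful transformation monoid where
`G` is a group (realized as a submonoid of `T(X)` all of whose elements are
invertible). Then `(X, G ∪ X̄)`, obtained by adjoining all constant maps,
strongly divides the wreath product `(X, U_X) ≀ (G,G)`, with the covering
given by `φ(x,g) = x·g`. -/
theorem consts_adjoined_sdiv_wreath (X : Type) (G : Submonoid (TMon X))
    (hG : ∀ g : G, IsUnit g) :
    TM.SDivVia (subTM X (withConstsSub X G)) ((subTM X (UXsub X)).wr (regTM G))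
      (fun (p : X × G) => p.2.1 p.1) := by
  refine TM.sdivVia_of_faithful (subTM_faithful X _) (fun x => ⟨(x, (1 : G)), rfl⟩) ?_
  rintro ⟨h, hh | ⟨c, rfl⟩⟩
  · exact ⟨(fun _ => 1, ⟨h, hh⟩), fun _ => rfl⟩
  · -- at state `(x, g)`, first jump to `g⁻¹ c`, which `g` then moves to `c`
    have hinv : ∀ g : G, g.val ((((hG g).unit⁻¹ : Gˣ) : G).val c) = c := fun g =>
      congrFun (congrArg Subtype.val (hG g).val_inv_mul) c
    exact ⟨(fun g => ⟨fun _ => (((hG g).unit⁻¹ : Gˣ) : G).val c, Or.inr ⟨_, rfl⟩⟩, 1),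
      fun ⟨_, g⟩ => hinv g⟩
end

section
/- The transformation monoid ({a₀,…,a_n}, U_{n+1}) strongly divides the direct product ({a₀,…,a_{n-1}}, U_n) × ({a₀,a_n}, U_2), where U_k denotes the monoid of all constant maps on the k-element state set together with the identity. The covering surjection is φ(a_k, a_ℓ) = a_{max(k,ℓ)}. -/
/-- The direct product of transformation monoids, with coordinatewise
action. -/
def TM.prod (S T : TM) : TM where
  X := S.X × T.X
  M := S.M × T.M
  act := fun p q => (S.act p.1 q.1, T.act p.2 q.2)
  act_one := fun p => Prod.ext (S.act_one _) (T.act_one _)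
  act_mul := fun p m n => Prod.ext (S.act_mul _ _ _) (T.act_mul _ _ _)


/-!
A state-set surjection `φ : Y → X` turns a transformation monoid `(Y, N)` into a cover of
`(X, U)`, `U ⊆ T(X)`, as soon as every `h ∈ U` is induced by some `m ∈ N`, i.e.
`φ (y·m) = h (φ y)`: the elements of `N` inducing a member of `U` form a submonoid, and
sending such an element to the (by surjectivity unique) map it induces is a surjective
homomorphism onto `U`. For `φ(a_k, a_ℓ) = a_{max(k,ℓ)}` the identity is induced by the
identity, a constant `a_k` with `k < n` by `(ā_k, ā_0)`, and `a_n` by `(1, ā_n)`.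
-/

namespace TM

def Induces (T : TM) {X : Type} (φ : T.X → X) (m : T.M) (h : TMon X) : Prop :=
  ∀ y, φ (T.act y m) = h (φ y)

variable {T : TM} {X : Type} {φ : T.X → X}

theorem induces_one : T.Induces φ 1 1 := fun y => by
  rw [T.act_one]
  rfl

theorem Induces.mul {m m' : T.M} {h h' : TMon X} (hm : T.Induces φ m h)
    (hm' : T.Induces φ m' h') : T.Induces φ (m * m') (h * h') := fun y => by
  rw [T.act_mul, hm', hm]
  rfl

def inducingSubmonoid (T : TM) {X : Type} (φ : T.X → X) (U : Submonoid (TMon X)) :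
    Submonoid T.M where
  carrier := {m | ∃ h ∈ U, T.Induces φ m h}
  one_mem' := ⟨1, U.one_mem, induces_one⟩
  mul_mem' := by
    rintro m m' ⟨h, hU, hm⟩ ⟨h', hU', hm'⟩
    exact ⟨h * h', U.mul_mem hU hU', hm.mul hm'⟩

noncomputable def induced (hφ : Function.Surjective φ) (m : T.M) : TMon X :=
  fun x => φ (T.act (Function.surjInv hφ x) m)

theorem induced_eq (hφ : Function.Surjective φ) {m : T.M} {h : TMon X}
    (hm : T.Induces φ m h) : induced hφ m = h :=
  funext fun x => (hm _).trans (congrArg h (Function.surjInv_eq hφ x))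

noncomputable def inducedHom (U : Submonoid (TMon X)) (hφ : Function.Surjective φ) :
    T.inducingSubmonoid φ U →* U where
  toFun m := ⟨induced hφ m, by
    obtain ⟨h, hU, hm⟩ := m.2
    rwa [induced_eq hφ hm]⟩
  map_one' := Subtype.ext (induced_eq hφ induces_one)
  map_mul' := by
    rintro ⟨m, h, -, hm⟩ ⟨m', h', -, hm'⟩
    exact Subtype.ext ((induced_eq hφ (hm.mul hm')).trans
      (congrArg₂ (· * ·) (induced_eq hφ hm).symm (induced_eq hφ hm').symm))

theorem sdivVia_subTM_of_forall_induces {U : Submonoid (TMon X)}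
    (hφ : Function.Surjective φ) (hlift : ∀ h ∈ U, ∃ m, T.Induces φ m h) :
    SDivVia (subTM X U) T φ := by
  refine ⟨hφ, T.inducingSubmonoid φ U, inducedHom U hφ, ?_, ?_⟩
  · rintro ⟨h, hU⟩
    obtain ⟨m, hm⟩ := hlift h hU
    exact ⟨⟨m, h, hU, hm⟩, Subtype.ext (induced_eq hφ hm)⟩
  · rintro y ⟨m, h, -, hm⟩
    show φ (T.act y m) = induced hφ m (φ y)
    rw [induced_eq hφ hm, hm]

end TM

def UXsub.const {X : Type} (p : X) : UXsub X :=
  ⟨fun _ => p, Or.inr ⟨p, rfl⟩⟩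

theorem mem_UXsub {X : Type} {f : TMon X} : f ∈ UXsub X ↔ f = 1 ∨ ∃ p, f = fun _ => p :=
  Iff.rfl

namespace UCover

def coverMap (n : ℕ) (p : Fin n × Fin 2) : Fin (n + 1) :=
  if p.2 = 1 then Fin.last n else Fin.castSucc p.1

theorem coverMap_one (n : ℕ) (k : Fin n) : coverMap n (k, 1) = Fin.last n :=
  if_pos rfl

theorem coverMap_zero (n : ℕ) (k : Fin n) : coverMap n (k, 0) = k.castSucc :=
  if_neg zero_ne_one

theorem coverMap_surjective (n : ℕ) (hn : 1 ≤ n) : Function.Surjective (coverMap n) :=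
  Fin.lastCases ⟨(⟨0, hn⟩, 1), coverMap_one n _⟩ fun k => ⟨(k, 0), coverMap_zero n k⟩

theorem exists_induces_const (n : ℕ) (p : Fin (n + 1)) :
    ∃ m, ((subTM (Fin n) (UXsub (Fin n))).prod (subTM (Fin 2) (UXsub (Fin 2)))).Induces
      (coverMap n) m (fun _ => p) := by
  induction p using Fin.lastCases with
  | last => exact ⟨(1, UXsub.const 1), fun y => coverMap_one n y.1⟩
  | cast k => exact ⟨(UXsub.const k, UXsub.const 0), fun _ => coverMap_zero n k⟩

end UCover

open UCover in
/-- The transformation monoid `({a₀,…,aₙ}, U_{n+1})`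
strongly divides the direct product
`({a₀,…,a_{n-1}}, U_n) × ({a₀,a_n}, U_2)`, with the covering surjection
`φ(a_k, a_ℓ) = a_{max(k,ℓ)}`. Here the state sets are modelled by
`Fin (n+1)`, `Fin n` and `Fin 2` (the two-element state set `{a₀,a_n}` with
`0 ↦ a₀`, `1 ↦ aₙ`), and `U_Y = Ȳ ∪ {1}` is the monoid of all constant maps
together with the identity. -/
theorem U_np1_sdiv_prod (n : ℕ) (hn : 1 ≤ n) :
    TM.SDivVia (subTM (Fin (n + 1)) (UXsub (Fin (n + 1))))
      ((subTM (Fin n) (UXsub (Fin n))).prod (subTM (Fin 2) (UXsub (Fin 2))))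
      (fun (p : Fin n × Fin 2) => if p.2 = 1 then Fin.last n else Fin.castSucc p.1) := by
  refine TM.sdivVia_subTM_of_forall_induces (coverMap_surjective n hn) fun h hh => ?_
  rcases mem_UXsub.mp hh with rfl | ⟨p, rfl⟩
  · exact ⟨1, TM.induces_one⟩
  · exact exists_induces_const n p
end
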